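/- Let F be a field with char F ≠ 2 and (Ω,C) a Jordan configuration, i.e. a rainbow such that for all classes C, D ∈ C and all pairs (α,β), (α',β') lying in the same class of C one has |C(α)∩D^T(β)| + |D(α)∩C^T(β)| = |C(α')∩D^T(β')| + |D(α')∩C^T(β')|. Then the linear span in M_Ω(F) of the adjacency matrices of the classes of C is a coherent J-algebra: it contains I_Ω and J_Ω and is closed under transposition, the Jordan product A★B = (AB+BA)/2, and the Hadamard product. -/

import Mathlib

open Matrix

noncomputable section

namespace JordanPaper

open scoped Classical

variable {Ω : Type*}

/-- The adjacency matrix (over `F`) of a binary relation on `Ω`. -/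
def adj (F : Type*) [Zero F] [One F] (c : Set (Ω × Ω)) : Matrix Ω Ω F :=
  Matrix.of fun a b => if (a, b) ∈ c then 1 else 0

/-- The all-ones matrix. -/
def allOnes (F : Type*) [One F] : Matrix Ω Ω F :=
  Matrix.of fun _ _ => 1

/-- The diagonal relation `1_Δ` on a subset `Δ ⊆ Ω`. -/
def diagRel (Δ : Set Ω) : Set (Ω × Ω) := {p | p.1 = p.2 ∧ p.1 ∈ Δ}

/-- The transposed relation. -/
def transposeRel (c : Set (Ω × Ω)) : Set (Ω × Ω) := {p | (p.2, p.1) ∈ c}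

/-- `outSet c α = c(α) = {β | (α,β) ∈ c}`. -/
def outSet (c : Set (Ω × Ω)) (α : Ω) : Set Ω := {β | (α, β) ∈ c}

/-- A partition of `Ω × Ω` into nonempty pairwise disjoint classes. -/
def IsPartition (P : Set (Set (Ω × Ω))) : Prop :=
  (∀ c ∈ P, c.Nonempty) ∧ (∀ c ∈ P, ∀ d ∈ P, c ≠ d → c ∩ d = ∅) ∧ ⋃₀ P = Set.univ

/-- A partition of `Δ × Δ` into nonempty pairwise disjoint classes. -/
def IsPartitionOn (Δ : Set Ω) (P : Set (Set (Ω × Ω))) : Prop :=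
  (∀ c ∈ P, c.Nonempty) ∧ (∀ c ∈ P, ∀ d ∈ P, c ≠ d → c ∩ d = ∅) ∧ ⋃₀ P = Δ ×ˢ Δ

/-- A rainbow: a partition of `Ω × Ω` such that the diagonal is a union of classes
and the set of classes is closed under transposition. -/
def IsRainbow (P : Set (Set (Ω × Ω))) : Prop :=
  IsPartition P ∧
  (∀ c ∈ P, (c ∩ diagRel (Set.univ : Set Ω)).Nonempty → c ⊆ diagRel (Set.univ : Set Ω)) ∧
  (∀ c ∈ P, transposeRel c ∈ P)

/-- `|c(α) ∩ dᵀ(β)|`. -/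
def cnum (c d : Set (Ω × Ω)) (α β : Ω) : ℕ :=
  (outSet c α ∩ outSet (transposeRel d) β).ncard

/-- `|c(α) ∩ dᵀ(β)| + |d(α) ∩ cᵀ(β)|`. -/
def jnum (c d : Set (Ω × Ω)) (α β : Ω) : ℕ :=
  cnum c d α β + cnum d c α β

/-- The coherence (intersection-number) condition. -/
def IsCoherentCond (P : Set (Set (Ω × Ω))) : Prop :=
  ∀ c ∈ P, ∀ d ∈ P, ∀ f ∈ P, ∀ p ∈ f, ∀ q ∈ f,
    cnum c d (p : Ω × Ω).1 (p : Ω × Ω).2 = cnum c d (q : Ω × Ω).1 (q : Ω × Ω).2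

/-- The Jordan (symmetrized intersection-number) condition. -/
def IsJordanCond (P : Set (Set (Ω × Ω))) : Prop :=
  ∀ c ∈ P, ∀ d ∈ P, ∀ f ∈ P, ∀ p ∈ f, ∀ q ∈ f,
    jnum c d (p : Ω × Ω).1 (p : Ω × Ω).2 = jnum c d (q : Ω × Ω).1 (q : Ω × Ω).2

/-- A coherent configuration. -/
def IsCoherentConfig (P : Set (Set (Ω × Ω))) : Prop := IsRainbow P ∧ IsCoherentCond P

/-- A Jordan configuration. -/
def IsJordanConfig (P : Set (Set (Ω × Ω))) : Prop := IsRainbow P ∧ IsJordanCond P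

/-- An association scheme on a subset `Δ` (homogeneous coherent configuration on `Δ`). -/
def IsAssocSchemeOn (Δ : Set Ω) (P : Set (Set (Ω × Ω))) : Prop :=
  IsPartitionOn Δ P ∧ diagRel Δ ∈ P ∧ (∀ c ∈ P, transposeRel c ∈ P) ∧ IsCoherentCond P

/-- The Jordan product of matrices. -/
def jmul (F : Type*) [Field F] [Fintype Ω] (x y : Matrix Ω Ω F) : Matrix Ω Ω F :=
  (2 : F)⁻¹ • (x * y + y * x)

/-- A coherent algebra. -/
def IsCoherentAlgebra (F : Type*) [Field F] [Fintype Ω] [DecidableEq Ω]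
    (A : Submodule F (Matrix Ω Ω F)) : Prop :=
  (1 : Matrix Ω Ω F) ∈ A ∧ allOnes F ∈ A ∧ (∀ x ∈ A, xᵀ ∈ A) ∧
  (∀ x ∈ A, ∀ y ∈ A, x * y ∈ A) ∧ (∀ x ∈ A, ∀ y ∈ A, Matrix.hadamard x y ∈ A)

/-- A coherent Jordan algebra. -/
def IsCoherentJAlgebra (F : Type*) [Field F] [Fintype Ω] [DecidableEq Ω]
    (A : Submodule F (Matrix Ω Ω F)) : Prop :=
  (1 : Matrix Ω Ω F) ∈ A ∧ allOnes F ∈ A ∧ (∀ x ∈ A, xᵀ ∈ A) ∧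
  (∀ x ∈ A, ∀ y ∈ A, jmul F x y ∈ A) ∧ (∀ x ∈ A, ∀ y ∈ A, Matrix.hadamard x y ∈ A)

/-!
A matrix lies in the span of the adjacency matrices of a partition exactly when it is constant
on the classes. The `(α, β)` entry of `A_c A_d + A_d A_c` is the Jordan number
`|c(α) ∩ dᵀ(β)| + |d(α) ∩ cᵀ(β)|`, which the Jordan condition makes constant on classes, and
`A_c ⊙ A_d` is `A_c` or `0`. Since both products are bilinear, closure of the span follows from
closure on the generators.
-/

theorem bilin_apply_mem_span {R M : Type*} [CommSemiring R] [AddCommMonoid M] [Module R M]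
    (B : M →ₗ[R] M →ₗ[R] M) {s : Set M} (hs : ∀ a ∈ s, ∀ b ∈ s, B a b ∈ Submodule.span R s)
    {x y : M} (hx : x ∈ Submodule.span R s) (hy : y ∈ Submodule.span R s) :
    B x y ∈ Submodule.span R s := by
  have hxy := Submodule.apply_mem_map₂ B hx hy
  rw [Submodule.map₂_span_span] at hxy
  exact Submodule.span_le.mpr (Set.image2_subset_iff.mpr hs) hxy

section SpanOfAdjacency

variable {R : Type*} {P : Set (Set (Ω × Ω))}

theorem IsPartition.exists_mem (hP : IsPartition P) (p : Ω × Ω) :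
    ∃ f ∈ P, p ∈ f :=
  Set.mem_sUnion.mp (hP.2.2 ▸ Set.mem_univ p)

theorem IsPartition.eq_of_mem (hP : IsPartition P) {f g : Set (Ω × Ω)} (hf : f ∈ P)
    (hg : g ∈ P) {p : Ω × Ω} (hpf : p ∈ f) (hpg : p ∈ g) : f = g := by
  by_contra hfg
  exact (hP.2.1 f hf g hg hfg).subset ⟨hpf, hpg⟩

theorem adj_apply [Zero R] [One R] (c : Set (Ω × Ω)) (α β : Ω) :
    adj R c α β = if (α, β) ∈ c then 1 else 0 :=
  rfl

theorem adj_empty [Zero R] [One R] : adj R (∅ : Set (Ω × Ω)) = 0 := by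
  ext α β
  simp [adj_apply]

theorem transpose_adj [Zero R] [One R] (c : Set (Ω × Ω)) :
    (adj R c)ᵀ = adj R (transposeRel c) :=
  rfl

theorem adj_hadamard_adj [MulZeroOneClass R] (c d : Set (Ω × Ω)) :
    adj R c ⊙ adj R d = adj R (c ∩ d) := by
  ext α β
  by_cases hc : (α, β) ∈ c <;> by_cases hd : (α, β) ∈ d <;> simp [adj_apply, hc, hd]

theorem adj_mul_adj_apply [Fintype Ω] [NonAssocSemiring R] (c d : Set (Ω × Ω)) (α β : Ω) :
    (adj R c * adj R d) α β = cnum c d α β := by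
  have hterm : ∀ γ, adj R c α γ * adj R d γ β =
      if γ ∈ outSet c α ∩ outSet (transposeRel d) β then 1 else 0 := by
    intro γ
    by_cases hc : (α, γ) ∈ c <;> by_cases hd : (γ, β) ∈ d <;>
      simp [adj_apply, outSet, transposeRel, hc, hd]
  rw [Matrix.mul_apply, Finset.sum_congr rfl fun γ _ => hterm γ, Finset.sum_boole, cnum,
    Set.ncard_eq_toFinset_card']
  congr 2
  ext γ
  simp

theorem IsPartition.mem_span_adj [Finite Ω] [Semiring R] (hP : IsPartition P)
    {x : Matrix Ω Ω R} (hx : ∀ f ∈ P, ∀ p ∈ f, ∀ q ∈ f, x p.1 p.2 = x q.1 q.2) :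
    x ∈ Submodule.span R (adj R '' P) := by
  have hfin : P.Finite := Set.toFinite P
  let value : Set (Ω × Ω) → R := fun f =>
    if hf : f.Nonempty then x hf.some.1 hf.some.2 else 0
  have hsum : x = ∑ f ∈ hfin.toFinset, value f • adj R f := by
    ext α β
    obtain ⟨f, hf, hαβ⟩ := hP.exists_mem (α, β)
    rw [Matrix.sum_apply, Finset.sum_eq_single f]
    · have hne : f.Nonempty := ⟨_, hαβ⟩
      simp [value, hne, adj_apply, hαβ, hx f hf _ hαβ _ hne.some_mem]
    · intro g hg hgf
      have hαβg : (α, β) ∉ g := fun h => hgf (hP.eq_of_mem (hfin.mem_toFinset.mp hg) hf h hαβ)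
      simp [adj_apply, hαβg]
    · simp [hf]
  rw [hsum]
  exact Submodule.sum_mem _ fun f hf =>
    Submodule.smul_mem _ _ (Submodule.subset_span ⟨f, hfin.mem_toFinset.mp hf, rfl⟩)

theorem one_mem_span_adj [Finite Ω] [DecidableEq Ω] [Semiring R] (hP : IsPartition P)
    (hdiag : ∀ c ∈ P, (c ∩ diagRel (Set.univ : Set Ω)).Nonempty →
      c ⊆ diagRel (Set.univ : Set Ω)) :
    (1 : Matrix Ω Ω R) ∈ Submodule.span R (adj R '' P) := by
  refine hP.mem_span_adj fun f hf p hp q hq => ?_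
  have hdiag_of_diag : ∀ r ∈ f, ∀ s ∈ f, r.1 = r.2 → s.1 = s.2 := fun r hr s hs hr' =>
    (hdiag f hf ⟨r, hr, hr', trivial⟩ hs).1
  by_cases hpq : p.1 = p.2
  · simp [Matrix.one_apply, hpq, hdiag_of_diag p hp q hq hpq]
  · simp [hpq, mt (hdiag_of_diag q hq p hp)]

theorem allOnes_mem_span_adj [Finite Ω] [Semiring R] (hP : IsPartition P) :
    allOnes R ∈ Submodule.span R (adj R '' P) :=
  hP.mem_span_adj fun _ _ _ _ _ _ => rfl

theorem transpose_mem_span_adj [Semiring R] (htrans : ∀ c ∈ P, transposeRel c ∈ P)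
    {x : Matrix Ω Ω R} (hx : x ∈ Submodule.span R (adj R '' P)) :
    xᵀ ∈ Submodule.span R (adj R '' P) := by
  have hxT := Submodule.apply_mem_span_image_of_mem_span
    (Matrix.transposeLinearEquiv Ω Ω R R).toLinearMap hx
  refine Submodule.span_mono ?_ hxT
  rintro _ ⟨_, ⟨c, hc, rfl⟩, rfl⟩
  exact ⟨transposeRel c, htrans c hc, (transpose_adj c).symm⟩

theorem hadamard_mem_span_adj [Finite Ω] [CommSemiring R] (hP : IsPartition P)
    {x y : Matrix Ω Ω R} (hx : x ∈ Submodule.span R (adj R '' P))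
    (hy : y ∈ Submodule.span R (adj R '' P)) :
    x ⊙ y ∈ Submodule.span R (adj R '' P) := by
  refine bilin_apply_mem_span (LinearMap.mk₂ R (· ⊙ ·)
    (fun _ _ _ => add_hadamard _ _ _) (fun _ _ _ => smul_hadamard _ _ _)
    (fun _ _ _ => hadamard_add _ _ _) (fun _ _ _ => hadamard_smul _ _ _)) ?_ hx hy
  rintro _ ⟨c, hc, rfl⟩ _ ⟨d, hd, rfl⟩
  rw [LinearMap.mk₂_apply, adj_hadamard_adj]
  by_cases hcd : c = d
  · rw [hcd, Set.inter_self]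
    exact Submodule.subset_span ⟨d, hd, rfl⟩
  · rw [hP.2.1 c hc d hd hcd, adj_empty]
    exact Submodule.zero_mem _

theorem adj_jmul_adj_apply {F : Type*} [Field F] [Fintype Ω] (c d : Set (Ω × Ω)) (α β : Ω) :
    jmul F (adj F c) (adj F d) α β = (2 : F)⁻¹ * jnum c d α β := by
  simp [jmul, adj_mul_adj_apply, jnum]

theorem jmul_mem_span_adj {F : Type*} [Field F] [Fintype Ω] (hP : IsPartition P)
    (hjordan : IsJordanCond P) {x y : Matrix Ω Ω F}
    (hx : x ∈ Submodule.span F (adj F '' P)) (hy : y ∈ Submodule.span F (adj F '' P)) :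
    jmul F x y ∈ Submodule.span F (adj F '' P) := by
  refine bilin_apply_mem_span (LinearMap.mk₂ F (jmul F) ?_ ?_ ?_ ?_) ?_ hx hy
  · intro x x' y
    simp only [jmul, add_mul, mul_add]
    module
  · intro a x y
    simp only [jmul, Matrix.smul_mul, Matrix.mul_smul, smul_add, smul_comm a]
  · intro x y y'
    simp only [jmul, add_mul, mul_add]
    module
  · intro a x y
    simp only [jmul, Matrix.smul_mul, Matrix.mul_smul, smul_add, smul_comm a]
  rintro _ ⟨c, hc, rfl⟩ _ ⟨d, hd, rfl⟩
  refine hP.mem_span_adj fun f hf p hp q hq => ?_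
  rw [LinearMap.mk₂_apply, adj_jmul_adj_apply, adj_jmul_adj_apply,
    hjordan c hc d hd f hf p hp q hq]

end SpanOfAdjacency

theorem statement3_general {F : Type*} [Field F]
    {Ω : Type*} [Fintype Ω] [DecidableEq Ω]
    (P : Set (Set (Ω × Ω)))
    (hrainbow : IsRainbow P) (hjordan : IsJordanCond P) :
    IsCoherentJAlgebra F (Submodule.span F (adj F '' P)) := by
  obtain ⟨hP, hdiag, htrans⟩ := hrainbow
  exact ⟨one_mem_span_adj hP hdiag, allOnes_mem_span_adj hP,
    fun _ hx => transpose_mem_span_adj htrans hx,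
    fun _ hx _ hy => jmul_mem_span_adj hP hjordan hx hy,
    fun _ hx _ hy => hadamard_mem_span_adj hP hx hy⟩

theorem statement3 {F : Type*} [Field F] (hchar : ringChar F ≠ 2)
    {Ω : Type*} [Fintype Ω] [DecidableEq Ω] [Nonempty Ω]
    (P : Set (Set (Ω × Ω)))
    (hrainbow : IsRainbow P) (hjordan : IsJordanCond P) :
    IsCoherentJAlgebra F (Submodule.span F (adj F '' P)) :=
  statement3_general P hrainbow hjordan

end JordanPaper

end
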